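/- arXiv:1510.08788 — 14 statements merged into one kernel-verified Lean document; each statement's English description precedes it below -/
import Mathlib

section
/- Let n ≥ 1, let z₀, z₁, …, zₙ ∈ ℂ with zⱼ ≠ z₀ for all j, and let q₁, …, qₙ ∈ ℝ satisfy ∑ⱼ qⱼ = 0 and ∑ⱼ qⱼ/(zⱼ − z₀) = 0. Let Φ(z) = (az + b)/(cz + d) with a, b, c, d ∈ ℂ, ad − bc ≠ 0, and suppose cz₀ + d ≠ 0, czⱼ + d ≠ 0 for all j. Then Φ(zⱼ) ≠ Φ(z₀) for all j and ∑ⱼ qⱼ/(Φ(zⱼ) − Φ(z₀)) = 0. (Möbius invariance of discrete holomorphic quadratic differentials, stated at a single interior vertex.) -/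
/-- Möbius invariance of discrete holomorphic quadratic differentials, stated
at a single interior vertex. -/
theorem mobius_invariance_dhqd (n : ℕ) (hn : 1 ≤ n)
    (z₀ : ℂ) (z : Fin n → ℂ) (q : Fin n → ℝ)
    (hz : ∀ j, z j ≠ z₀)
    (hq0 : ∑ j, (q j : ℂ) = 0)
    (hq1 : ∑ j, (q j : ℂ) / (z j - z₀) = 0)
    (a b c d : ℂ) (habcd : a * d - b * c ≠ 0)
    (Φ : ℂ → ℂ) (hΦ : ∀ w, Φ w = (a * w + b) / (c * w + d))
    (hd0 : c * z₀ + d ≠ 0) (hdj : ∀ j, c * z j + d ≠ 0) :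
    (∀ j, Φ (z j) ≠ Φ z₀) ∧ ∑ j, (q j : ℂ) / (Φ (z j) - Φ z₀) = 0 := by
  have hsub : ∀ j, z j - z₀ ≠ 0 := fun j => sub_ne_zero.mpr (hz j)
  have key : ∀ j, Φ (z j) - Φ z₀ =
      (a * d - b * c) * (z j - z₀) / ((c * z j + d) * (c * z₀ + d)) := by
    intro j
    rw [hΦ, hΦ]
    rw [div_sub_div _ _ (hdj j) hd0]
    ring
  have hne : ∀ j, Φ (z j) ≠ Φ z₀ := by
    intro j h
    have := key j
    rw [h, sub_self] at this
    have := this.symm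
    clear key
    have hnum : (a * d - b * c) * (z j - z₀) ≠ 0 := mul_ne_zero habcd (hsub j)
    rw [div_eq_zero_iff] at this
    rcases this with h1 | h1
    · exact hnum h1
    · exact mul_ne_zero (hdj j) hd0 h1
  refine ⟨hne, ?_⟩
  have term : ∀ j, (q j : ℂ) / (Φ (z j) - Φ z₀) =
      (c * z₀ + d) * c / (a * d - b * c) * (q j : ℂ)
      + (c * z₀ + d) * (c * z₀ + d) / (a * d - b * c) * ((q j : ℂ) / (z j - z₀)) := by
    intro j
    rw [key j, div_div_eq_mul_div]
    field_simp [habcd, hsub j, hdj j, hd0]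
    ring
  rw [Finset.sum_congr rfl (fun j _ => term j), Finset.sum_add_distrib,
    ← Finset.mul_sum, ← Finset.mul_sum, hq0, hq1, mul_zero, mul_zero, add_zero]
end

section
/- Let n ≥ 1, let z₀, z₁, …, zₙ ∈ ℂ all be nonzero with zⱼ ≠ z₀ for all j, and let q₁, …, qₙ ∈ ℝ. Then ∑ⱼ qⱼ/(1/zⱼ − 1/z₀) = −z₀ ∑ⱼ qⱼ − z₀² ∑ⱼ qⱼ/(zⱼ − z₀). In particular, if ∑ⱼ qⱼ = 0 and ∑ⱼ qⱼ/(zⱼ − z₀) = 0, then ∑ⱼ qⱼ/(1/zⱼ − 1/z₀) = 0. -/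
/-- The key computation showing invariance of the discrete holomorphic quadratic
differential condition under the inversion `z ↦ 1/z`. -/
theorem inversion_identity_dhqd (n : ℕ) (hn : 1 ≤ n)
    (z₀ : ℂ) (z : Fin n → ℂ) (q : Fin n → ℝ)
    (hz₀ : z₀ ≠ 0) (hznz : ∀ j, z j ≠ 0) (hz : ∀ j, z j ≠ z₀) :
    (∑ j, (q j : ℂ) / (1 / z j - 1 / z₀) =
      -z₀ * ∑ j, (q j : ℂ) - z₀ ^ 2 * ∑ j, (q j : ℂ) / (z j - z₀)) ∧
    ((∑ j, (q j : ℂ) = 0 → ∑ j, (q j : ℂ) / (z j - z₀) = 0 →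
      ∑ j, (q j : ℂ) / (1 / z j - 1 / z₀) = 0)) := by
  have key : ∑ j, (q j : ℂ) / (1 / z j - 1 / z₀) =
      -z₀ * ∑ j, (q j : ℂ) - z₀ ^ 2 * ∑ j, (q j : ℂ) / (z j - z₀) := by
    rw [Finset.mul_sum, Finset.mul_sum, ← Finset.sum_sub_distrib]
    apply Finset.sum_congr rfl
    intro j _
    have h1 : z j - z₀ ≠ 0 := sub_ne_zero.mpr (hz j)
    have h2 : z₀ - z j ≠ 0 := sub_ne_zero.mpr (Ne.symm (hz j))
    rw [div_sub_div _ _ (hznz j) hz₀, div_div_eq_mul_div]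
    field_simp
    ring
  exact ⟨key, fun h1 h2 => by rw [key, h1, h2]; ring⟩
end

section
/- Let n ≥ 1, let z₀, z₁, …, zₙ ∈ ℂ with zⱼ ≠ z₀ for all j, and let q₁, …, qₙ ∈ ℝ. Then the following are equivalent: (i) ∑ⱼ qⱼ = 0 and ∑ⱼ qⱼ/(zⱼ − z₀) = 0; (ii) ∑ⱼ (qⱼ/(zⱼ − z₀)) · (1 − z₀zⱼ, i(1 + z₀zⱼ), z₀ + zⱼ) = 0 in ℂ³ (each of the three components vanishes). -/
open Complex

/-- The local (single-vertex) content of the closedness of the `ℂ³`-valued dual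
1-form `η(e*_{ij}) = (q_{ij}/(zⱼ − zᵢ)) W(zᵢ, zⱼ)` characterizing discrete
holomorphic quadratic differentials. -/
theorem dhqd_iff_weierstrass_closed (n : ℕ) (hn : 1 ≤ n)
    (z₀ : ℂ) (z : Fin n → ℂ) (q : Fin n → ℝ)
    (hz : ∀ j, z j ≠ z₀) :
    ((∑ j, (q j : ℂ) = 0) ∧ (∑ j, (q j : ℂ) / (z j - z₀) = 0)) ↔
    (∑ j, ((q j : ℂ) / (z j - z₀)) •
        ![1 - z₀ * z j, I * (1 + z₀ * z j), z₀ + z j] = (0 : Fin 3 → ℂ)) := by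
  have hne : ∀ j, z j - z₀ ≠ 0 := fun j => sub_ne_zero.mpr (hz j)
  set Q := ∑ j, (q j : ℂ) with hQ
  set S := ∑ j, (q j : ℂ) / (z j - z₀) with hSdef
  have h0 : (∑ j, ((q j : ℂ) / (z j - z₀)) •
        ![1 - z₀ * z j, I * (1 + z₀ * z j), z₀ + z j])
      = ![(1 - z₀^2) * S - z₀ * Q, I * ((1 + z₀^2) * S + z₀ * Q), 2 * z₀ * S + Q] := by
    funext k
    fin_cases k
    · simp only [Finset.sum_apply, Pi.smul_apply, Fin.zero_eta, Matrix.cons_val_zero, smul_eq_mul,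
        hQ, hSdef, Finset.mul_sum, ← Finset.sum_sub_distrib]
      refine Finset.sum_congr rfl fun j _ => ?_
      field_simp [hne j]; ring
    · simp only [Finset.sum_apply, Pi.smul_apply, Fin.mk_one, Matrix.cons_val_zero, Matrix.cons_val_one, Matrix.head_cons,
        smul_eq_mul, hQ, hSdef, Finset.mul_sum, mul_add, Finset.sum_add_distrib]
      rw [← Finset.sum_add_distrib, ← Finset.sum_add_distrib]
      refine Finset.sum_congr rfl fun j _ => ?_
      field_simp [hne j]; ring
    · simp only [Finset.sum_apply, Pi.smul_apply, Fin.reduceFinMk, Matrix.cons_val_two, Matrix.tail_cons,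
        Matrix.head_cons, smul_eq_mul, hQ, hSdef, Finset.mul_sum, ← Finset.sum_add_distrib]
      refine Finset.sum_congr rfl fun j _ => ?_
      field_simp [hne j]; ring
  rw [h0]
  constructor
  · rintro ⟨h1, h2⟩
    funext k; fin_cases k <;> simp [h1, h2]
  · intro h
    have h1 := congrFun h 0
    have h2 := congrFun h 1
    have h3 := congrFun h 2
    simp only [Matrix.cons_val_zero, Matrix.cons_val_one, Matrix.head_cons,
      Matrix.cons_val_two, Matrix.tail_cons, Pi.zero_apply] at h1 h2 h3
    have h2' : (1 + z₀^2) * S + z₀ * Q = 0 := by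
      have := mul_eq_zero.mp h2
      rcases this with hI | h; · exact absurd hI I_ne_zero
      exact h
    have hS0 : S = 0 := by
      have : (2 : ℂ) * S = 0 := by linear_combination h1 + h2'
      exact (mul_eq_zero.mp this).resolve_left two_ne_zero
    have hQ0 : Q = 0 := by linear_combination h3 - 2 * z₀ * hS0
    exact ⟨hQ0, hS0⟩
end

section
/- Let zᵢ, zⱼ ∈ ℂ with zᵢ ≠ zⱼ and let q ∈ ℝ. Then the componentwise real part of the vector (q/(zⱼ − zᵢ)) · (1 − zᵢzⱼ, i(1 + zᵢzⱼ), zᵢ + zⱼ) ∈ ℂ³ equals (q (1 + |zᵢ|²)(1 + |zⱼ|²) / (2|zⱼ − zᵢ|²)) · (N(zⱼ) − N(zᵢ)) in ℝ³. -/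
open Complex Matrix

/-- The inverse stereographic projection `ℂ → 𝕊² ⊂ ℝ³`. -/
noncomputable def invStereo (z : ℂ) : Fin 3 → ℝ :=
  (1 + normSq z)⁻¹ • ![2 * z.re, 2 * z.im, normSq z - 1]

/-- The real part of the Weierstrass 1-form is an edge of the A-minimal surface:
it is a positive multiple of `N(zⱼ) − N(zᵢ)`. -/
theorem re_weierstrass_eq_diff_invStereo (zi zj : ℂ) (hij : zi ≠ zj) (q : ℝ) :
    (fun k => (((q : ℂ) / (zj - zi)) •
        ![1 - zi * zj, I * (1 + zi * zj), zi + zj] k).re) =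
      (q * (1 + normSq zi) * (1 + normSq zj) / (2 * normSq (zj - zi))) •
        (invStereo zj - invStereo zi) := by
  have h0 : (zj.re - zi.re) * (zj.re - zi.re) + (zj.im - zi.im) * (zj.im - zi.im) ≠ 0 := by
    have : normSq (zj - zi) ≠ 0 := by simpa [sub_eq_zero] using fun h => hij h.symm
    simpa [Complex.normSq_apply] using this
  have hi : (1 : ℝ) + (zi.re * zi.re + zi.im * zi.im) ≠ 0 := by
    nlinarith [sq_nonneg zi.re, sq_nonneg zi.im]
  have hj : (1 : ℝ) + (zj.re * zj.re + zj.im * zj.im) ≠ 0 := by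
    nlinarith [sq_nonneg zj.re, sq_nonneg zj.im]
  funext k
  fin_cases k <;>
  · simp only [invStereo, Complex.div_re, Complex.div_im, Complex.normSq_apply,
      Complex.mul_re, Complex.mul_im, Complex.add_re, Complex.add_im, Complex.one_re,
      Complex.one_im, Complex.sub_re, Complex.sub_im, Complex.I_re, Complex.I_im,
      Complex.ofReal_re, Complex.ofReal_im, smul_eq_mul, Matrix.smul_apply,
      Matrix.cons_val_zero, Matrix.cons_val_one, Matrix.head_cons, Matrix.cons_val_two,
      Matrix.tail_cons, Pi.sub_apply, Pi.smul_apply, Fin.zero_eta, Fin.mk_one, Fin.reduceFinMk]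
    field_simp
    ring
end

section
/- Let zᵢ, zⱼ ∈ ℂ with zᵢ ≠ zⱼ and let q ∈ ℝ. Then the componentwise real part of the vector i · (q/(zⱼ − zᵢ)) · (1 − zᵢzⱼ, i(1 + zᵢzⱼ), zᵢ + zⱼ) ∈ ℂ³ equals (q (1 + |zᵢ|²)(1 + |zⱼ|²) / (2|zⱼ − zᵢ|²)) · (N(zᵢ) × N(zⱼ)) in ℝ³, where × is the cross product in ℝ³. -/
open Complex Matrix

/-- The real part of `i` times the Weierstrass 1-form is an edge of the
C-minimal surface: it is a positive multiple of `N(zᵢ) × N(zⱼ)`. -/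
theorem re_I_weierstrass_eq_cross_invStereo (zi zj : ℂ) (hij : zi ≠ zj) (q : ℝ) :
    (fun k => (I • (((q : ℂ) / (zj - zi)) •
        ![1 - zi * zj, I * (1 + zi * zj), zi + zj]) k).re) =
      (q * (1 + normSq zi) * (1 + normSq zj) / (2 * normSq (zj - zi))) •
        (crossProduct (invStereo zi) (invStereo zj)) := by
  have hd : normSq (zj - zi) ≠ 0 := by
    simpa [sub_eq_zero] using fun h => hij h.symm
  have h1 : (1 : ℝ) + normSq zi ≠ 0 :=
    (add_pos_of_pos_of_nonneg one_pos (normSq_nonneg _)).ne'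
  have h2 : (1 : ℝ) + normSq zj ≠ 0 :=
    (add_pos_of_pos_of_nonneg one_pos (normSq_nonneg _)).ne'
  funext k
  fin_cases k <;>
  · simp only [Fin.zero_eta, Fin.mk_one, Fin.reduceFinMk, cross_apply]
    simp only [invStereo, crossProduct, Matrix.cons_val', Matrix.cons_val_zero,
      Matrix.cons_val_one, Matrix.head_cons, Matrix.head_fin_const, Matrix.empty_val',
      Matrix.cons_val_fin_one, Pi.smul_apply, smul_eq_mul, Matrix.smul_cons,
      Matrix.smul_empty, Matrix.cons_val_two, Matrix.tail_cons, Complex.smul_re,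
      Complex.I_re, Complex.I_im, Complex.mul_re, Complex.mul_im, Complex.div_re,
      Complex.div_im, Complex.normSq_apply, Complex.sub_re, Complex.sub_im,
      Complex.add_re, Complex.add_im, Complex.one_re, Complex.one_im,
      Complex.ofReal_re, Complex.ofReal_im]
    rw [Complex.normSq_apply, Complex.sub_re, Complex.sub_im] at hd
    rw [Complex.normSq_apply] at h1 h2
    field_simp
    ring
end

section
/- Let n ≥ 1, let N₀, N₁, …, Nₙ ∈ ℝ³ be unit vectors, and let k₁, …, kₙ ∈ ℝ. Then ∑ⱼ kⱼ (Nⱼ − N₀) = 0 if and only if both ∑ⱼ kⱼ (N₀ × Nⱼ) = 0 and ∑ⱼ kⱼ (1 − ⟨N₀, Nⱼ⟩) = 0. (This is the local correspondence between an A-minimal surface and its conjugate C-minimal surface at an interior vertex.) -/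
open Matrix

/-- The Euclidean dot product on `ℝ³`. -/
def dot3 (u v : Fin 3 → ℝ) : ℝ := u ⬝ᵥ v

/-- The local correspondence between an A-minimal surface and its conjugate
C-minimal surface at an interior vertex. -/
theorem aMinimal_iff_cMinimal_local (n : ℕ) (hn : 1 ≤ n)
    (N₀ : Fin 3 → ℝ) (N : Fin n → (Fin 3 → ℝ)) (k : Fin n → ℝ)
    (hN₀ : dot3 N₀ N₀ = 1) (hN : ∀ j, dot3 (N j) (N j) = 1) :
    (∑ j, k j • (N j - N₀) = 0) ↔
      ((∑ j, k j • crossProduct N₀ (N j) = 0) ∧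
        (∑ j, k j * (1 - dot3 N₀ (N j)) = 0)) := by
  have hn0 : N₀ 0 * N₀ 0 + N₀ 1 * N₀ 1 + N₀ 2 * N₀ 2 = 1 := by
    simpa [dot3, dotProduct, Fin.sum_univ_three] using hN₀
  set S : Fin 3 → ℝ := ∑ j, k j • (N j - N₀) with hS
  have hA : ∑ j, k j • crossProduct N₀ (N j) = crossProduct N₀ S := by
    rw [hS, map_sum]
    refine Finset.sum_congr rfl fun j _ => ?_
    rw [LinearMap.map_smul, map_sub, cross_self, sub_zero]
  have hB : ∑ j, k j * (1 - dot3 N₀ (N j)) = - dot3 N₀ S := by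
    simp only [dot3, dotProduct, Fin.sum_univ_three, hS, Finset.sum_apply,
      Pi.smul_apply, Pi.sub_apply, smul_eq_mul, Finset.mul_sum]
    rw [← Finset.sum_add_distrib, ← Finset.sum_add_distrib, ← Finset.sum_neg_distrib]
    refine Finset.sum_congr rfl fun j _ => ?_
    linear_combination (-(k j)) * hn0
  rw [hA, hB]
  constructor
  · intro h
    rw [h, map_zero]
    simp [dot3]
  · rintro ⟨h1, h2⟩
    have hc := congrFun (cross_apply N₀ S ▸ h1)
    have h0 := hc 0
    have hone := hc 1
    have htwo := hc 2
    simp only [Matrix.cons_val_zero, Matrix.cons_val_one, Matrix.head_cons,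
      Matrix.cons_val_two, Matrix.tail_cons, Pi.zero_apply] at h0 hone htwo
    have h2' : dot3 N₀ S = 0 := by linarith
    have hd : N₀ 0 * S 0 + N₀ 1 * S 1 + N₀ 2 * S 2 = 0 := by
      simpa [dot3, dotProduct, Fin.sum_univ_three] using h2'
    funext i
    fin_cases i
    · show S 0 = 0
      linear_combination N₀ 0 * hd - N₀ 1 * htwo + N₀ 2 * hone - S 0 * hn0
    · show S 1 = 0
      linear_combination N₀ 1 * hd + N₀ 0 * htwo - N₀ 2 * h0 - S 1 * hn0
    · show S 2 = 0
      linear_combination N₀ 2 * hd + N₀ 1 * h0 - N₀ 0 * hone - S 2 * hn0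
end

section
/- Let n ≥ 1, let N, N₁, …, Nₙ ∈ ℝ³ be unit vectors with ⟨N, Nⱼ⟩ ≠ −1 for all j, and let k₁, …, kₙ ∈ ℝ. Set rⱼ = (N + Nⱼ)/(1 + ⟨N, Nⱼ⟩). Then ∑ⱼ kⱼ (Nⱼ − N) = 0 if and only if both ∑ⱼ kⱼ (N × Nⱼ) = 0 and ∑ⱼ kⱼ rⱼ × (N × Nⱼ) = 0. -/
open Matrix

lemma triple_identity (a b : Fin 3 → ℝ) (ha : dot3 a a = 1) (hb : dot3 b b = 1) :
    crossProduct (a + b) (crossProduct a b) = (1 + dot3 a b) • (a - b) := by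
  simp only [dot3, dotProduct, Fin.sum_univ_three] at ha hb ⊢
  funext i
  fin_cases i
  · simp [crossProduct]; linear_combination a 0 * hb - b 0 * ha
  · simp [crossProduct]; linear_combination a 1 * hb - b 1 * ha
  · simp [crossProduct]; linear_combination a 2 * hb - b 2 * ha

/-- Force balance at a vertex is equivalent to the balance of forces and
torques on the polar dual face. -/
theorem force_balance_iff_force_torque_balance (n : ℕ) (hn : 1 ≤ n)
    (N : Fin 3 → ℝ) (Nj : Fin n → (Fin 3 → ℝ)) (k : Fin n → ℝ)
    (hN : dot3 N N = 1) (hNj : ∀ j, dot3 (Nj j) (Nj j) = 1)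
    (hadm : ∀ j, dot3 N (Nj j) ≠ -1)
    (r : Fin n → (Fin 3 → ℝ))
    (hr : ∀ j, r j = (1 + dot3 N (Nj j))⁻¹ • (N + Nj j)) :
    (∑ j, k j • (Nj j - N) = 0) ↔
      ((∑ j, k j • crossProduct N (Nj j) = 0) ∧
        (∑ j, k j • crossProduct (r j) (crossProduct N (Nj j)) = 0)) := by
  have hc : ∀ j, (1 + dot3 N (Nj j)) ≠ 0 := by
    intro j h
    exact hadm j (by linarith)
  have key : ∀ j, crossProduct (r j) (crossProduct N (Nj j)) = N - Nj j := by
    intro j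
    rw [hr j, LinearMap.map_smul, LinearMap.smul_apply,
      triple_identity N (Nj j) hN (hNj j), smul_smul, inv_mul_cancel₀ (hc j), one_smul]
  have e3 : ∑ j, k j • (N - Nj j) = -∑ j, k j • (Nj j - N) := by
    rw [← Finset.sum_neg_distrib]
    exact Finset.sum_congr rfl fun j _ => by rw [← smul_neg, neg_sub]
  simp only [key, e3]
  constructor
  · intro h
    constructor
    · have e1 : ∑ j, k j • crossProduct N (Nj j)
          = crossProduct N (∑ j, k j • (Nj j - N)) := by
        rw [map_sum]
        exact Finset.sum_congr rfl fun j _ => by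
          rw [_root_.map_smul, map_sub, cross_self, sub_zero]
      rw [e1, h, map_zero]
    · rw [h, neg_zero]
  · rintro ⟨-, h2⟩
    exact neg_eq_zero.mp h2
end

section
/- Let a, b, c, d ∈ ℂ with ad − bc = 1 and define Φ(z) = (az + b)/(cz + d). Let zᵢ, zⱼ ∈ ℂ with zᵢ ≠ zⱼ, czᵢ + d ≠ 0 and czⱼ + d ≠ 0. Define the 3×3 complex matrix A_Φ with rows ((a² − b² − c² + d²)/2, i(a² + b² − c² − d²)/2, −ab + cd), (i(−a² + b² − c² + d²)/2, (a² + b² + c² + d²)/2, i(ab + cd)), (−ac + bd, −i(ac + bd), ad + bc). Then (1/(Φ(zⱼ) − Φ(zᵢ))) · (1 − Φ(zᵢ)Φ(zⱼ), i(1 + Φ(zᵢ)Φ(zⱼ)), Φ(zᵢ) + Φ(zⱼ)) = A_Φ · ((1/(zⱼ − zᵢ)) · (1 − zᵢzⱼ, i(1 + zᵢzⱼ), zᵢ + zⱼ)) in ℂ³. -/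
open Complex Matrix

/-- Auxiliary polynomial form of the Goursat identity. -/
theorem goursat_aux (a b c d p q zi zj : ℂ)
    (hp : p * (c * zi + d) = a * zi + b)
    (hq : q * (c * zj + d) = a * zj + b)
    (hqp : (q - p) * ((c * zi + d) * (c * zj + d)) = zj - zi)
    (hzz : zj - zi ≠ 0) (hne : q - p ≠ 0) (k : Fin 3) :
    ((1 / (q - p)) •
        ![1 - p * q, I * (1 + p * q), p + q]) k =
      ((!![(a ^ 2 - b ^ 2 - c ^ 2 + d ^ 2) / 2,
                  I * (a ^ 2 + b ^ 2 - c ^ 2 - d ^ 2) / 2,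
                  -(a * b) + c * d;
                  I * (-a ^ 2 + b ^ 2 - c ^ 2 + d ^ 2) / 2,
                  (a ^ 2 + b ^ 2 + c ^ 2 + d ^ 2) / 2,
                  I * (a * b + c * d);
                  -(a * c) + b * d,
                  -(I * (a * c + b * d)),
                  a * d + b * c] : Matrix (Fin 3) (Fin 3) ℂ).mulVec ((1 / (zj - zi)) •
        ![1 - zi * zj, I * (1 + zi * zj), zi + zj])) k := by
  fin_cases k
  · simp only [Pi.smul_apply, Matrix.mulVec, dotProduct,
      Fin.sum_univ_three, Matrix.cons_val', Matrix.cons_val_zero, Matrix.cons_val_one,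
      Matrix.head_cons, Matrix.cons_val_two, Matrix.tail_cons, smul_eq_mul,
      Matrix.cons_val_fin_one, Matrix.empty_val', Matrix.of_apply]
    simp only [Fin.mk_zero, Fin.mk_one, Fin.reduceFinMk, Matrix.cons_val]
    field_simp
    linear_combination (-2*(q-p)*q*(c*zj+d)) * hp + (-2*(q-p)*(a*zi+b)) * hq
      + (-2*(1-q*p)) * hqp + (-((q-p)*(a^2+b^2-c^2-d^2)*(1+zj*zi))) * Complex.I_sq
  · simp only [Pi.smul_apply, Matrix.mulVec, dotProduct,
      Fin.sum_univ_three, Matrix.cons_val', Matrix.cons_val_zero, Matrix.cons_val_one,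
      Matrix.head_cons, Matrix.cons_val_two, Matrix.tail_cons, smul_eq_mul,
      Matrix.cons_val_fin_one, Matrix.empty_val', Matrix.of_apply]
    simp only [Fin.mk_zero, Fin.mk_one, Fin.reduceFinMk, Matrix.cons_val]
    field_simp
    linear_combination (2*(q-p)*q*(c*zj+d)) * hp + (2*(q-p)*(a*zi+b)) * hq
      + (-2*(1+q*p)) * hqp
  · simp only [Pi.smul_apply, Matrix.mulVec, dotProduct,
      Fin.sum_univ_three, Matrix.cons_val', Matrix.cons_val_zero, Matrix.cons_val_one,
      Matrix.head_cons, Matrix.cons_val_two, Matrix.tail_cons, smul_eq_mul,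
      Matrix.cons_val_fin_one, Matrix.empty_val', Matrix.of_apply]
    simp only [Fin.mk_zero, Fin.mk_one, Fin.reduceFinMk, Matrix.cons_val]
    field_simp
    linear_combination ((q-p)*(c*zj+d)) * hp + ((q-p)*(c*zi+d)) * hq + (-(p+q)) * hqp
      + ((q-p)*(a*c+b*d)*(1+zj*zi)) * Complex.I_sq

/-- The Goursat transformation: the complex rotation `A_Φ` acting on the
Weierstrass vector corresponds to the Möbius transformation `Φ` acting on the
Gauss map. -/
theorem goursat_matrix_identity (a b c d : ℂ) (h : a * d - b * c = 1)
    (Φ : ℂ → ℂ) (hΦ : ∀ w, Φ w = (a * w + b) / (c * w + d))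
    (zi zj : ℂ) (hij : zi ≠ zj) (hdi : c * zi + d ≠ 0) (hdj : c * zj + d ≠ 0)
    (AΦ : Matrix (Fin 3) (Fin 3) ℂ)
    (hA : AΦ = !![(a ^ 2 - b ^ 2 - c ^ 2 + d ^ 2) / 2,
                  I * (a ^ 2 + b ^ 2 - c ^ 2 - d ^ 2) / 2,
                  -(a * b) + c * d;
                  I * (-a ^ 2 + b ^ 2 - c ^ 2 + d ^ 2) / 2,
                  (a ^ 2 + b ^ 2 + c ^ 2 + d ^ 2) / 2,
                  I * (a * b + c * d);
                  -(a * c) + b * d,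
                  -(I * (a * c + b * d)),
                  a * d + b * c]) :
    (1 / (Φ zj - Φ zi)) •
        ![1 - Φ zi * Φ zj, I * (1 + Φ zi * Φ zj), Φ zi + Φ zj] =
      AΦ.mulVec ((1 / (zj - zi)) •
        ![1 - zi * zj, I * (1 + zi * zj), zi + zj]) := by
  have hzz : zj - zi ≠ 0 := sub_ne_zero.mpr (Ne.symm hij)
  have hp : Φ zi * (c * zi + d) = a * zi + b := by
    rw [hΦ]; exact div_mul_cancel₀ _ hdi
  have hq : Φ zj * (c * zj + d) = a * zj + b := by
    rw [hΦ]; exact div_mul_cancel₀ _ hdj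
  have hdiff : Φ zj - Φ zi = (zj - zi) / ((c * zi + d) * (c * zj + d)) := by
    rw [hΦ, hΦ, div_sub_div _ _ hdj hdi, div_eq_div_iff (mul_ne_zero hdj hdi) (mul_ne_zero hdi hdj)]
    linear_combination (zj - zi) * (c*zi+d) * (c*zj+d) * h
  have hqp : (Φ zj - Φ zi) * ((c * zi + d) * (c * zj + d)) = zj - zi := by
    rw [hdiff]; exact div_mul_cancel₀ _ (mul_ne_zero hdi hdj)
  have hne : Φ zj - Φ zi ≠ 0 := by
    rw [hdiff]; exact div_ne_zero hzz (mul_ne_zero hdi hdj)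
  subst hA
  funext k
  exact goursat_aux a b c d (Φ zi) (Φ zj) zi zj hp hq hqp hzz hne k
end

section
/- Let n ≥ 3 and let γ₁, …, γₙ : ℝ → ℝ³ be curves, each differentiable at 0, with indices taken cyclically (γ_{n+1} = γ₁, γ₀ = γₙ). Define the vector area A(t) = (1/2) ∑_{i=1}^{n} γᵢ(t) × γ_{i+1}(t). If A(0) ≠ 0 and N = A(0)/‖A(0)‖, then the function t ↦ ‖A(t)‖ is differentiable at 0 with derivative (1/2) ∑_{i=1}^{n} ⟨(γ_{i+1}(0) − γ_{i−1}(0)) × N, γᵢ′(0)⟩. -/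
open Matrix

/-- The Euclidean norm on `ℝ³`. -/
noncomputable def norm3 (u : Fin 3 → ℝ) : ℝ := Real.sqrt (dot3 u u)

lemma hasDerivAt_cross3 {u v : ℝ → Fin 3 → ℝ} {u' v' : Fin 3 → ℝ} {x : ℝ}
    (hu : HasDerivAt u u' x) (hv : HasDerivAt v v' x) :
    HasDerivAt (fun t => crossProduct (u t) (v t))
      (crossProduct u' (v x) + crossProduct (u x) v') x := by
  rw [hasDerivAt_pi] at hu hv ⊢
  intro j
  fin_cases j
  · simpa [crossProduct, sub_add_sub_comm, Pi.mul_def, Pi.sub_def] using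
      (((hu 1).mul (hv 2)).sub ((hu 2).mul (hv 1)))
  · simpa [crossProduct, sub_add_sub_comm, Pi.mul_def, Pi.sub_def] using
      (((hu 2).mul (hv 0)).sub ((hu 0).mul (hv 2)))
  · simpa [crossProduct, sub_add_sub_comm, Pi.mul_def, Pi.sub_def] using
      (((hu 0).mul (hv 1)).sub ((hu 1).mul (hv 0)))

lemma hasDerivAt_dot3 {u v : ℝ → Fin 3 → ℝ} {u' v' : Fin 3 → ℝ} {x : ℝ}
    (hu : HasDerivAt u u' x) (hv : HasDerivAt v v' x) :
    HasDerivAt (fun t => dot3 (u t) (v t)) (dot3 u' (v x) + dot3 (u x) v') x := by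
  rw [hasDerivAt_pi] at hu hv
  have h := (((hu 0).mul (hv 0)).add ((hu 1).mul (hv 1))).add ((hu 2).mul (hv 2))
  refine (h.congr_deriv ?_).congr_of_eventuallyEq (Filter.Eventually.of_forall fun t => ?_)
  · simp [dot3, dotProduct, Fin.sum_univ_three] <;> ring
  · simp [dot3, dotProduct, Fin.sum_univ_three]

lemma dot3_self_pos {u : Fin 3 → ℝ} (hu : u ≠ 0) : 0 < dot3 u u := by
  have hd : dot3 u u = u 0 * u 0 + u 1 * u 1 + u 2 * u 2 := by
    simp [dot3, dotProduct, Fin.sum_univ_three]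
  have key : u 0 ≠ 0 ∨ u 1 ≠ 0 ∨ u 2 ≠ 0 := by
    by_contra hc
    push_neg at hc
    apply hu
    funext j
    fin_cases j <;> simp [hc.1, hc.2.1, hc.2.2]
  rw [hd]
  rcases key with h | h | h <;>
    nlinarith [mul_self_pos.mpr h, mul_self_nonneg (u 0), mul_self_nonneg (u 1),
      mul_self_nonneg (u 2)]

lemma dot3_sum {ι : Type*} (s : Finset ι) (u : Fin 3 → ℝ) (f : ι → Fin 3 → ℝ) :
    dot3 u (∑ i ∈ s, f i) = ∑ i ∈ s, dot3 u (f i) := by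
  simp only [dot3, dotProduct, Finset.sum_apply, Finset.mul_sum]
  rw [Finset.sum_comm]

lemma triple3 (a b c w : Fin 3 → ℝ) :
    dot3 w (crossProduct a b) + dot3 w (crossProduct c a)
      = dot3 (crossProduct (b - c) w) a := by
  simp [dot3, crossProduct, dotProduct, Fin.sum_univ_three]; ring

/-- First variation of the area of a (possibly non-planar) closed polygon in
`ℝ³`, measured by the magnitude of its vector area. -/
theorem hasDerivAt_polygon_area (n : ℕ) [NeZero n] (hn : 3 ≤ n)
    (γ : Fin n → ℝ → (Fin 3 → ℝ))
    (hγ : ∀ i, DifferentiableAt ℝ (γ i) 0)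
    (A : ℝ → (Fin 3 → ℝ))
    (hA : ∀ t, A t = (1 / 2 : ℝ) • ∑ i, crossProduct (γ i t) (γ (i + 1) t))
    (hA0 : A 0 ≠ 0)
    (N : Fin 3 → ℝ) (hN : N = (norm3 (A 0))⁻¹ • A 0) :
    HasDerivAt (fun t => norm3 (A t))
      ((1 / 2 : ℝ) * ∑ i,
        dot3 (crossProduct (γ (i + 1) 0 - γ (i - 1) 0) N) (deriv (γ i) 0)) 0 := by
  set g : Fin n → Fin 3 → ℝ := fun i => deriv (γ i) 0 with hg
  have hγd : ∀ i, HasDerivAt (γ i) (g i) 0 := fun i => (hγ i).hasDerivAt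
  set B' : Fin 3 → ℝ :=
    ∑ i, (crossProduct (g i) (γ (i + 1) 0) + crossProduct (γ i 0) (g (i + 1)))
    with hB'
  have hB : HasDerivAt (fun t => ∑ i, crossProduct (γ i t) (γ (i + 1) t)) B' 0 :=
    HasDerivAt.fun_sum fun i _ => hasDerivAt_cross3 (hγd i) (hγd (i + 1))
  have hAfun : A = fun t => (1 / 2 : ℝ) • ∑ i, crossProduct (γ i t) (γ (i + 1) t) :=
    funext hA
  have hAd : HasDerivAt A ((1 / 2 : ℝ) • B') 0 := by
    rw [hAfun]; exact hB.const_smul (1 / 2 : ℝ)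
  have hf0 : 0 < dot3 (A 0) (A 0) := dot3_self_pos hA0
  have hfd : HasDerivAt (fun t => dot3 (A t) (A t))
      (dot3 ((1 / 2 : ℝ) • B') (A 0) + dot3 (A 0) ((1 / 2 : ℝ) • B')) 0 :=
    hasDerivAt_dot3 hAd hAd
  have hsq := (Real.hasDerivAt_sqrt hf0.ne').comp 0 hfd
  have key : HasDerivAt (fun t => norm3 (A t))
      (1 / (2 * Real.sqrt (dot3 (A 0) (A 0))) *
        (dot3 ((1 / 2 : ℝ) • B') (A 0) + dot3 (A 0) ((1 / 2 : ℝ) • B'))) 0 := by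
    simpa [norm3, Function.comp_def] using hsq
  convert key using 1
  -- now the algebraic identity
  set r := Real.sqrt (dot3 (A 0) (A 0)) with hr
  have hrpos : 0 < r := Real.sqrt_pos.mpr hf0
  -- main triple-product computation with A 0 in place of N
  have main : dot3 (A 0) B' =
      ∑ i, dot3 (crossProduct (γ (i + 1) 0 - γ (i - 1) 0) (A 0)) (g i) := by
    have h1 : dot3 (A 0) B' =
        ∑ i, (dot3 (A 0) (crossProduct (g i) (γ (i + 1) 0))
          + dot3 (A 0) (crossProduct (γ i 0) (g (i + 1)))) := by
      rw [hB', dot3_sum]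
      exact Finset.sum_congr rfl fun i _ => by simp [dot3, dotProduct_add]
    have h2 : (∑ i, dot3 (A 0) (crossProduct (γ i 0) (g (i + 1))))
        = ∑ i, dot3 (A 0) (crossProduct (γ (i - 1) 0) (g i)) := by
      apply Fintype.sum_equiv (Equiv.addRight (1 : Fin n))
      intro i
      simp
    rw [h1, Finset.sum_add_distrib, h2, ← Finset.sum_add_distrib]
    exact Finset.sum_congr rfl fun i _ => triple3 (g i) (γ (i + 1) 0) (γ (i - 1) 0) (A 0)
  -- rewrite LHS using N = r⁻¹ • A 0
  have hNs : ∀ w : Fin 3 → ℝ, (crossProduct w) N = r⁻¹ • (crossProduct w) (A 0) := by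
    intro w
    rw [hN]; unfold norm3; rw [← hr]; exact (crossProduct w).map_smul _ _
  calc (1 / 2 : ℝ) * ∑ i, dot3 (crossProduct (γ (i + 1) 0 - γ (i - 1) 0) N) (g i)
      = (1 / 2 : ℝ) * ∑ i, r⁻¹ *
          dot3 (crossProduct (γ (i + 1) 0 - γ (i - 1) 0) (A 0)) (g i) := by
        congr 1
        refine Finset.sum_congr rfl fun i _ => ?_
        rw [hNs]
        simp [dot3, smul_dotProduct]
    _ = 1 / (2 * r) * (dot3 ((1 / 2 : ℝ) • B') (A 0) + dot3 (A 0) ((1 / 2 : ℝ) • B')) := by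
        rw [← Finset.mul_sum, ← main]
        have hcomm : dot3 ((1 / 2 : ℝ) • B') (A 0) = dot3 (A 0) ((1 / 2 : ℝ) • B') := by
          simp [dot3, dotProduct_comm]
        rw [hcomm]
        have hsm : dot3 (A 0) ((1 / 2 : ℝ) • B') = (1 / 2 : ℝ) * dot3 (A 0) B' := by
          simp [dot3, dotProduct_smul]
        rw [hsm]
        field_simp
        ring
end

section
/- Let fᵢ, fⱼ, f_k ∈ ℝ³ be affinely independent points and let N = ((fⱼ − fᵢ) × (f_k − fᵢ))/‖(fⱼ − fᵢ) × (f_k − fᵢ)‖ be the unit normal of the triangle. Let ∠jki denote the interior angle at f_k (the angle between fⱼ − f_k and fᵢ − f_k) and ∠ijk the interior angle at fⱼ (the angle between fᵢ − fⱼ and f_k − fⱼ). Then N × (fⱼ − f_k) = cot(∠jki) (fⱼ − fᵢ) − cot(∠ijk) (fᵢ − f_k). -/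
open Matrix

/-- The angle between two vectors of `ℝ³`. -/
noncomputable def angle3 (u v : Fin 3 → ℝ) : ℝ :=
  Real.arccos (dot3 u v / (norm3 u * norm3 v))

lemma dot3_expand (u v : Fin 3 → ℝ) :
    dot3 u v = u 0 * v 0 + u 1 * v 1 + u 2 * v 2 := by
  simp [dot3, dotProduct, Fin.sum_univ_three]

lemma lagrange3 (a b : Fin 3 → ℝ) :
    dot3 (crossProduct a b) (crossProduct a b)
      = dot3 a a * dot3 b b - dot3 a b ^ 2 := by
  simp only [dot3_expand, cross_apply]
  simp
  ring

lemma dot3_self_nonneg (a : Fin 3 → ℝ) : 0 ≤ dot3 a a := by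
  rw [dot3_expand]
  nlinarith [mul_self_nonneg (a 0), mul_self_nonneg (a 1), mul_self_nonneg (a 2)]

lemma dot3_self_pos_s13 (a : Fin 3 → ℝ) (ha : a ≠ 0) : 0 < dot3 a a := by
  rcases (dot3_self_nonneg a).lt_or_eq with h | h
  · exact h
  exfalso
  apply ha
  rw [dot3_expand] at h
  funext i
  have h0 : a 0 = 0 ∧ a 1 = 0 ∧ a 2 = 0 := by
    constructor
    · nlinarith [sq_nonneg (a 0), sq_nonneg (a 1), sq_nonneg (a 2)]
    constructor
    · nlinarith [sq_nonneg (a 0), sq_nonneg (a 1), sq_nonneg (a 2)]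
    · nlinarith [sq_nonneg (a 0), sq_nonneg (a 1), sq_nonneg (a 2)]
  fin_cases i <;> simp [h0.1, h0.2.1, h0.2.2]

lemma norm3_pos (a : Fin 3 → ℝ) (ha : a ≠ 0) : 0 < norm3 a :=
  Real.sqrt_pos.mpr (dot3_self_pos_s13 a ha)

lemma norm3_sq (a : Fin 3 → ℝ) : norm3 a ^ 2 = dot3 a a :=
  Real.sq_sqrt (dot3_self_nonneg a)

lemma cot_angle3 (a b : Fin 3 → ℝ) (hc : crossProduct a b ≠ 0) :
    Real.cot (angle3 a b) = dot3 a b / norm3 (crossProduct a b) := by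
  have ha : a ≠ 0 := by
    rintro rfl
    apply hc
    funext i
    fin_cases i <;> simp [cross_apply]
  have hb : b ≠ 0 := by
    rintro rfl
    apply hc
    funext i
    fin_cases i <;> simp [cross_apply]
  have hna := norm3_pos a ha
  have hnb := norm3_pos b hb
  have hnc := norm3_pos _ hc
  have hlag := lagrange3 a b
  have hcc : 0 < dot3 (crossProduct a b) (crossProduct a b) := dot3_self_pos_s13 _ hc
  -- Cauchy-Schwarz bound
  have hcs : dot3 a b ^ 2 ≤ (norm3 a * norm3 b) ^ 2 := by
    have : (norm3 a * norm3 b) ^ 2 = dot3 a a * dot3 b b := by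
      rw [mul_pow, norm3_sq, norm3_sq]
    nlinarith
  have hab : |dot3 a b| ≤ norm3 a * norm3 b := by
    have h := Real.sqrt_le_sqrt hcs
    rwa [Real.sqrt_sq_eq_abs, Real.sqrt_sq (by positivity)] at h
  set x := dot3 a b / (norm3 a * norm3 b) with hx
  have hx1 : -1 ≤ x := by
    rw [hx, le_div_iff₀ (by positivity)]
    cases abs_le.mp hab with
    | intro h1 h2 => linarith
  have hx2 : x ≤ 1 := by
    rw [hx, div_le_one (by positivity)]
    cases abs_le.mp hab with
    | intro h1 h2 => linarith
  rw [angle3, Real.cot_eq_cos_div_sin, Real.cos_arccos hx1 hx2, Real.sin_arccos]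
  have hsq : 1 - x ^ 2 = (norm3 (crossProduct a b) / (norm3 a * norm3 b)) ^ 2 := by
    have hA := (dot3_self_pos_s13 a ha).ne'
    have hB := (dot3_self_pos_s13 b hb).ne'
    rw [hx, div_pow, div_pow, mul_pow, norm3_sq, norm3_sq, norm3_sq, hlag]
    field_simp
  rw [hsq, Real.sqrt_sq (by positivity), hx]
  field_simp

lemma cross3_ne_zero (fi fj fk : Fin 3 → ℝ)
    (h : AffineIndependent ℝ ![fi, fj, fk]) :
    crossProduct (fj - fi) (fk - fi) ≠ 0 := by
  rw [crossProduct_ne_zero_iff_linearIndependent]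
  have h' := (affineIndependent_iff_linearIndependent_vsub ℝ ![fi, fj, fk] 0).mp h
  let e : Fin 2 ≃ {x : Fin 3 // x ≠ 0} :=
    { toFun := ![⟨1, by decide⟩, ⟨2, by decide⟩]
      invFun := fun x => if x.1 = 1 then 0 else 1
      left_inv := fun i => by fin_cases i <;> rfl
      right_inv := fun x => by
        rcases x with ⟨x, hx⟩
        fin_cases x
        · exact absurd rfl hx
        · rfl
        · rfl }
  have h2 := h'.comp e e.injective
  have : (fun i : Fin 2 => (![fi, fj, fk] (e i).1 -ᵥ ![fi, fj, fk] 0 : Fin 3 → ℝ))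
      = ![fj - fi, fk - fi] := by
    funext i
    fin_cases i <;> rfl
  rwa [← this]

/-- The per-triangle identity behind the cotangent formula for the gradient of
the total area of a triangulated surface. -/
theorem cross_normal_eq_cotangent_combination (fi fj fk : Fin 3 → ℝ)
    (h : AffineIndependent ℝ ![fi, fj, fk])
    (N : Fin 3 → ℝ)
    (hN : N = (norm3 (crossProduct (fj - fi) (fk - fi)))⁻¹ •
        crossProduct (fj - fi) (fk - fi)) :
    crossProduct N (fj - fk) =
      Real.cot (angle3 (fj - fk) (fi - fk)) • (fj - fi) -
        Real.cot (angle3 (fi - fj) (fk - fj)) • (fi - fk) := by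
  set w : Fin 3 → ℝ := crossProduct (fj - fi) (fk - fi) with hw
  have hwne : w ≠ 0 := cross3_ne_zero fi fj fk h
  have c1 : crossProduct (fj - fk) (fi - fk) = -w := by
    funext i
    fin_cases i <;> simp [hw, cross_apply, Pi.sub_apply, Pi.neg_apply] <;> ring
  have c2 : crossProduct (fi - fj) (fk - fj) = -w := by
    funext i
    fin_cases i <;> simp [hw, cross_apply, Pi.sub_apply, Pi.neg_apply] <;> ring
  have hnw : norm3 (-w) = norm3 w := by
    unfold norm3
    congr 1
    simp only [dot3_expand, Pi.neg_apply]
    ring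
  have hnwpos := norm3_pos w hwne
  have hcot1 : Real.cot (angle3 (fj - fk) (fi - fk))
      = dot3 (fj - fk) (fi - fk) / norm3 w := by
    rw [cot_angle3 _ _ (by rw [c1]; simpa using hwne), c1, hnw]
  have hcot2 : Real.cot (angle3 (fi - fj) (fk - fj))
      = dot3 (fi - fj) (fk - fj) / norm3 w := by
    rw [cot_angle3 _ _ (by rw [c2]; simpa using hwne), c2, hnw]
  rw [hcot1, hcot2, hN]
  have hne : norm3 w ≠ 0 := ne_of_gt hnwpos
  funext i
  fin_cases i <;>
    · simp only [hw, dot3_expand, cross_apply, Pi.sub_apply, Pi.smul_apply,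
        smul_eq_mul]
      simp only [hw] at hne
      simp [Pi.sub_apply, Pi.smul_apply, smul_eq_mul]
      field_simp
      ring
end

section
/- Let Nᵢ, Nⱼ ∈ ℝ³ be unit vectors with Nᵢ ≠ Nⱼ and Nᵢ ≠ −Nⱼ, let μ ∈ ℝ and θ ∈ ℝ. Set df = μ (Nⱼ − Nᵢ)/‖Nⱼ − Nᵢ‖², df̃ = Nᵢ × df, and w = cos θ · df + sin θ · df̃. Then w × (Nⱼ − Nᵢ) = −μ sin θ (Nᵢ + Nⱼ)/2 and ⟨w, Nⱼ − Nᵢ⟩ = μ cos θ. -/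
open Matrix

private lemma cc3 (a u : Fin 3 → ℝ) :
    crossProduct (crossProduct a u) u = (dot3 a u) • u - (dot3 u u) • a := by
  funext i
  fin_cases i <;>
    simp [cross_apply, dot3, dotProduct, Fin.sum_univ_three] <;> ring

private lemma dc3 (a u : Fin 3 → ℝ) : dot3 (crossProduct a u) u = 0 := by
  simp [cross_apply, dot3, dotProduct, Fin.sum_univ_three]; ring

private lemma cross_smul_left (c : ℝ) (a u : Fin 3 → ℝ) :
    crossProduct (c • a) u = c • crossProduct a u := by
  funext i
  fin_cases i <;> simp [cross_apply]

private lemma cross_smul_right (c : ℝ) (a u : Fin 3 → ℝ) :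
    crossProduct a (c • u) = c • crossProduct a u := by
  funext i
  fin_cases i <;> simp [cross_apply]

private lemma cross_add_left (a b u : Fin 3 → ℝ) :
    crossProduct (a + b) u = crossProduct a u + crossProduct b u := by
  funext i
  fin_cases i <;> simp [cross_apply]

private lemma dot3_smul_left (c : ℝ) (a u : Fin 3 → ℝ) :
    dot3 (c • a) u = c * dot3 a u := by
  simp [dot3, dotProduct, Fin.sum_univ_three]; ring

private lemma dot3_add_left (a b u : Fin 3 → ℝ) :
    dot3 (a + b) u = dot3 a u + dot3 b u := by
  simp [dot3, dotProduct, Fin.sum_univ_three]; ring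

/-- The edgewise cross- and dot-products of the associated family of the
discrete minimal surfaces of a P-net with the Gauss map edge. -/
theorem associated_family_edge_identities (Ni Nj : Fin 3 → ℝ)
    (hNi : dot3 Ni Ni = 1) (hNj : dot3 Nj Nj = 1)
    (hne : Ni ≠ Nj) (hne' : Ni ≠ -Nj) (μ θ : ℝ)
    (df dftilde w : Fin 3 → ℝ)
    (hdf : df = (μ / dot3 (Nj - Ni) (Nj - Ni)) • (Nj - Ni))
    (hdft : dftilde = crossProduct Ni df)
    (hw : w = Real.cos θ • df + Real.sin θ • dftilde) :
    crossProduct w (Nj - Ni) = (-(μ * Real.sin θ) / 2) • (Ni + Nj) ∧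
      dot3 w (Nj - Ni) = μ * Real.cos θ := by
  set e : Fin 3 → ℝ := Nj - Ni with he
  set d : ℝ := dot3 e e with hd
  -- d ≠ 0
  have hd0 : d ≠ 0 := by
    intro h
    apply hne
    have h' : (e 0)^2 + (e 1)^2 + (e 2)^2 = 0 := by
      have := h.symm
      simp only [hd, dot3, dotProduct, Fin.sum_univ_three] at this
      nlinarith [this]
    have h0 : e 0 = 0 := by nlinarith [sq_nonneg (e 0), sq_nonneg (e 1), sq_nonneg (e 2)]
    have h1 : e 1 = 0 := by nlinarith [sq_nonneg (e 0), sq_nonneg (e 1), sq_nonneg (e 2)]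
    have h2 : e 2 = 0 := by nlinarith [sq_nonneg (e 0), sq_nonneg (e 1), sq_nonneg (e 2)]
    have he0 : Nj - Ni = 0 := by
      rw [← he]; funext i; fin_cases i <;> first | exact h0 | exact h1 | exact h2
    exact (sub_eq_zero.mp he0).symm
  -- key scalar fact : ⟨Ni, e⟩ = -d/2
  have hae : dot3 Ni e = -d / 2 := by
    simp only [he, hd, dot3, dotProduct, Fin.sum_univ_three, Pi.sub_apply] at *
    nlinarith [hNi, hNj]
  -- cross products
  have hcdf : crossProduct df e = 0 := by
    rw [hdf, cross_smul_left, cross_self, smul_zero]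
  have hcdft : crossProduct dftilde e = (-(μ/2)) • (Ni + Nj) := by
    rw [hdft, hdf, cross_smul_right, cross_smul_left, cc3, hae, ← hd]
    funext i
    fin_cases i <;>
      · simp only [Pi.smul_apply, Pi.sub_apply, Pi.add_apply, smul_eq_mul, he, Pi.sub_apply]
        field_simp
        ring
  constructor
  · rw [hw, cross_add_left, cross_smul_left, cross_smul_left, hcdf, hcdft,
      smul_zero, zero_add, smul_smul]
    rw [show Real.sin θ * -(μ/2) = -(μ * Real.sin θ)/2 by ring]
  · rw [hw, dot3_add_left, dot3_smul_left, dot3_smul_left]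
    have h1 : dot3 df e = μ := by
      rw [hdf, dot3_smul_left, ← hd]
      field_simp
    have h2 : dot3 dftilde e = 0 := by
      rw [hdft, hdf, cross_smul_right, dot3_smul_left, dc3, mul_zero]
    rw [h1, h2]
    ring
end

section
/- Let n be an even positive integer and let N₁, …, Nₙ ∈ ℝ³ be unit vectors with cyclic indexing (N_{n+1} = N₁), such that N_{i+1} ≠ Nᵢ and N_{i+1} ≠ −Nᵢ for all i. Let μᵢ = (−1)^i, fix θ ∈ ℝ, and set wᵢ = cos θ · μᵢ (N_{i+1} − Nᵢ)/‖N_{i+1} − Nᵢ‖² + sin θ · Nᵢ × (μᵢ (N_{i+1} − Nᵢ)/‖N_{i+1} − Nᵢ‖²). Then ∑_{i=1}^{n} (N_{i+1} − Nᵢ) × wᵢ = 0 and ∑_{i=1}^{n} ⟨N_{i+1} − Nᵢ, wᵢ⟩ = 0. (Hence every surface f^θ in the associated family of the discrete minimal surfaces of a P-net has vanishing mean curvature vector field, and is a critical point of the total area when the combinatorics is compact.) -/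
open Matrix

lemma dot3_self_ne_zero {x : Fin 3 → ℝ} (hx : x ≠ 0) : dot3 x x ≠ 0 := by
  simp only [dot3, dotProduct, Fin.sum_univ_three]
  intro h
  apply hx
  have h0 : x 0 = 0 := by nlinarith [sq_nonneg (x 0), sq_nonneg (x 1), sq_nonneg (x 2)]
  have h1 : x 1 = 0 := by nlinarith [sq_nonneg (x 0), sq_nonneg (x 1), sq_nonneg (x 2)]
  have h2 : x 2 = 0 := by nlinarith [sq_nonneg (x 0), sq_nonneg (x 1), sq_nonneg (x 2)]
  funext k
  fin_cases k <;> assumption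

lemma bac_cab (a b : Fin 3 → ℝ) :
    crossProduct a (crossProduct b a) = (dot3 a a) • b - (dot3 a b) • a := by
  funext k
  fin_cases k <;>
    simp [cross_apply, dot3, dotProduct, Fin.sum_univ_three, smul_eq_mul] <;> ring

lemma cross_term (u v : Fin 3 → ℝ) (hu : dot3 u u = 1) (hv : dot3 v v = 1)
    (hx : v - u ≠ 0) (c s e : ℝ) :
    crossProduct (v - u)
      (c • ((e / dot3 (v - u) (v - u)) • (v - u)) +
        s • crossProduct u ((e / dot3 (v - u) (v - u)) • (v - u))) =
      (s * e / 2) • (u + v) := by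
  have hq : dot3 (v - u) (v - u) ≠ 0 := dot3_self_ne_zero hx
  have hdu : dot3 (v - u) u = -(dot3 (v - u) (v - u)) / 2 := by
    simp only [dot3, dotProduct, Fin.sum_univ_three, Pi.sub_apply] at hu hv ⊢
    linear_combination (hv - hu) / 2
  have h1 : crossProduct (v - u)
      (c • ((e / dot3 (v - u) (v - u)) • (v - u)) +
        s • crossProduct u ((e / dot3 (v - u) (v - u)) • (v - u))) =
      (c * (e / dot3 (v - u) (v - u))) • crossProduct (v - u) (v - u) +
        (s * (e / dot3 (v - u) (v - u))) • crossProduct (v - u) (crossProduct u (v - u)) := by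
    simp [map_add, _root_.map_smul, smul_smul]
  rw [h1, cross_self, bac_cab, hdu]
  funext k
  simp only [Pi.add_apply, Pi.smul_apply, Pi.sub_apply, smul_eq_mul, smul_zero, zero_add]
  field_simp
  simp only [Pi.zero_apply]; ring

lemma dot_term (u v : Fin 3 → ℝ) (hx : v - u ≠ 0) (c s e : ℝ) :
    dot3 (v - u)
      (c • ((e / dot3 (v - u) (v - u)) • (v - u)) +
        s • crossProduct u ((e / dot3 (v - u) (v - u)) • (v - u))) = c * e := by
  have hq : dot3 (v - u) (v - u) ≠ 0 := dot3_self_ne_zero hx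
  have htriple : dot3 (v - u) (crossProduct u (v - u)) = 0 := dot_cross_self _ _
  have h1 : dot3 (v - u)
      (c • ((e / dot3 (v - u) (v - u)) • (v - u)) +
        s • crossProduct u ((e / dot3 (v - u) (v - u)) • (v - u))) =
      (c * (e / dot3 (v - u) (v - u))) * dot3 (v - u) (v - u) +
        (s * (e / dot3 (v - u) (v - u))) * dot3 (v - u) (crossProduct u (v - u)) := by
    simp [dot3, _root_.map_smul, dotProduct_add, dotProduct_smul, smul_eq_mul]
    ring
  rw [h1, htriple]
  field_simp
  ring

lemma eps_succ (n : ℕ) [NeZero n] (hn : Even n) (i : Fin n) :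
    ((-1 : ℝ)) ^ (((i + 1 : Fin n)) : ℕ) = -(-1) ^ (i : ℕ) := by
  have hn0 : n ≠ 0 := NeZero.ne n
  have h2 : 2 ≤ n := by
    obtain ⟨k, hk⟩ := hn; omega
  have hval : (((i + 1 : Fin n)) : ℕ) = ((i : ℕ) + 1) % n := by
    simp [Fin.add_def, Fin.val_one', Nat.mod_eq_of_lt (show 1 < n by omega)]
  rcases Nat.lt_or_ge ((i : ℕ) + 1) n with h | h
  · rw [hval, Nat.mod_eq_of_lt h, pow_succ]; ring
  · have hin : (i : ℕ) + 1 = n := by have := i.isLt; omega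
    rw [hval, hin, Nat.mod_self, pow_zero]
    have hi : (i : ℕ) = n - 1 := by omega
    have hodd : Odd (n - 1) := by
      obtain ⟨k, hk⟩ := hn; exact ⟨k - 1, by omega⟩
    rw [hi, hodd.neg_one_pow]; ring

lemma shift_sum (n : ℕ) [NeZero n] (hn : Even n) (g : Fin n → Fin 3 → ℝ) :
    ∑ i : Fin n, ((-1 : ℝ)) ^ (i : ℕ) • g (i + 1) =
      -∑ i : Fin n, ((-1 : ℝ)) ^ (i : ℕ) • g i := by
  rw [← Finset.sum_neg_distrib]
  apply Fintype.sum_equiv (Equiv.addRight (1 : Fin n))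
  intro i
  simp only [Equiv.coe_addRight]
  rw [eps_succ n hn i]
  simp

/-- Every surface `f^θ` in the associated family of the discrete minimal
surfaces of a P-net has vanishing mean curvature vector field: around each
even face with alternating P-labeling `μᵢ = (−1)ⁱ`, the edge vectors `wᵢ` of
`f^θ` satisfy `∑ᵢ dN(e_{i,i+1}) × df^θ(e*_{i,i+1}) = 0` and
`∑ᵢ ⟨dN(e_{i,i+1}), df^θ(e*_{i,i+1})⟩ = 0`. -/
theorem associated_family_vanishing_mean_curvature
    (n : ℕ) [NeZero n] (hpos : 0 < n) (heven : Even n)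
    (N : Fin n → (Fin 3 → ℝ))
    (hN : ∀ i, dot3 (N i) (N i) = 1)
    (hne : ∀ i : Fin n, N (i + 1) ≠ N i)
    (hne' : ∀ i : Fin n, N (i + 1) ≠ -N i)
    (θ : ℝ) (w : Fin n → (Fin 3 → ℝ))
    (hw : ∀ i : Fin n,
      w i = Real.cos θ •
          (((-1 : ℝ) ^ (i : ℕ) / dot3 (N (i + 1) - N i) (N (i + 1) - N i)) •
            (N (i + 1) - N i)) +
        Real.sin θ • crossProduct (N i)
          (((-1 : ℝ) ^ (i : ℕ) / dot3 (N (i + 1) - N i) (N (i + 1) - N i)) •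
            (N (i + 1) - N i))) :
    (∑ i : Fin n, crossProduct (N (i + 1) - N i) (w i) = 0) ∧
      (∑ i : Fin n, dot3 (N (i + 1) - N i) (w i) = 0) := by
  have hxne : ∀ i : Fin n, N (i + 1) - N i ≠ 0 := fun i => sub_ne_zero_of_ne (hne i)
  constructor
  · have h1 : ∀ i : Fin n, crossProduct (N (i + 1) - N i) (w i) =
        (Real.sin θ / 2) • (((-1 : ℝ)) ^ (i : ℕ) • N i) +
          (Real.sin θ / 2) • (((-1 : ℝ)) ^ (i : ℕ) • N (i + 1)) := by
      intro i
      rw [hw i, cross_term (N i) (N (i + 1)) (hN i) (hN (i + 1)) (hxne i)]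
      funext k
      simp only [Pi.add_apply, Pi.smul_apply, smul_eq_mul]
      ring
    calc ∑ i : Fin n, crossProduct (N (i + 1) - N i) (w i)
        = ∑ i : Fin n, ((Real.sin θ / 2) • (((-1 : ℝ)) ^ (i : ℕ) • N i) +
            (Real.sin θ / 2) • (((-1 : ℝ)) ^ (i : ℕ) • N (i + 1))) :=
          Finset.sum_congr rfl fun i _ => h1 i
      _ = (Real.sin θ / 2) • (∑ i : Fin n, ((-1 : ℝ)) ^ (i : ℕ) • N i) +
            (Real.sin θ / 2) • (∑ i : Fin n, ((-1 : ℝ)) ^ (i : ℕ) • N (i + 1)) := by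
          rw [Finset.sum_add_distrib, Finset.smul_sum, Finset.smul_sum]
      _ = 0 := by rw [shift_sum n heven]; simp
  · have h2 : ∀ i : Fin n, dot3 (N (i + 1) - N i) (w i) =
        Real.cos θ * ((-1 : ℝ)) ^ (i : ℕ) := by
      intro i
      rw [hw i, dot_term (N i) (N (i + 1)) (hxne i)]
    calc ∑ i : Fin n, dot3 (N (i + 1) - N i) (w i)
        = Real.cos θ * ∑ i : Fin n, ((-1 : ℝ)) ^ (i : ℕ) := by
          rw [Finset.mul_sum]; exact Finset.sum_congr rfl fun i _ => h2 i
      _ = 0 := by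
          rw [Fin.sum_univ_eq_sum_range (fun k => ((-1 : ℝ)) ^ k), neg_one_geom_sum,
            if_pos heven, mul_zero]
end

section
/- Let z₀ ∈ ℂ, let z₁, z₂, z₃, z₄ ∈ ℂ be its four 'edge' neighbors and w₁, w₂, w₃, w₄ ∈ ℂ its four 'diagonal' neighbors (indices cyclic, w₅ = w₁), all points involved in each quadrilateral being pairwise distinct. Suppose each of the four quadrilaterals (z₀, zᵢ, wᵢ, z_{i+1}) for i = 1, 2, 3, 4 (with z₅ = z₁) has cross-ratio ((z₀ − zᵢ)(wᵢ − z_{i+1}))/((zᵢ − wᵢ)(z_{i+1} − z₀)) = −1. Then 1/(w₁ − z₀) − 1/(w₂ − z₀) + 1/(w₃ − z₀) − 1/(w₄ − z₀) = 0, i.e. the diagonal neighbors of z₀ satisfy the parallelogram property of a P-net. -/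
/-- If the cross-ratio of `z₀, a, w, b` equals `-1`, then under inversion at `z₀`,
`1/(w - z₀)` is the midpoint of `1/(a - z₀)` and `1/(b - z₀)`. -/
lemma cr_neg_one_midpoint (z₀ a w b : ℂ)
    (ha : a ≠ z₀) (hb : b ≠ z₀) (hw : w ≠ z₀) (haw : a ≠ w) (hwb : w ≠ b)
    (h : (z₀ - a) * (w - b) / ((a - w) * (b - z₀)) = -1) :
    1 / (w - z₀) = 1 / 2 * (1 / (a - z₀) + 1 / (b - z₀)) := by
  have h1 : a - w ≠ 0 := sub_ne_zero.mpr haw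
  have h2 : b - z₀ ≠ 0 := sub_ne_zero.mpr hb
  have h3 : a - z₀ ≠ 0 := sub_ne_zero.mpr ha
  have h4 : w - z₀ ≠ 0 := sub_ne_zero.mpr hw
  have h' : (z₀ - a) * (w - b) = -1 * ((a - w) * (b - z₀)) :=
    (div_eq_iff (mul_ne_zero h1 h2)).mp h
  field_simp
  linear_combination h'

/-- Half the vertices of a quadrilateral isothermic net with all cross-ratios
equal to `−1` form a P-net: the diagonal neighbors `w₁, w₂, w₃, w₄` of `z₀`
satisfy the parallelogram property. -/
theorem isothermic_diagonals_parallelogram_property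
    (z₀ z₁ z₂ z₃ z₄ w₁ w₂ w₃ w₄ : ℂ)
    (hd₁ : [z₀, z₁, w₁, z₂].Pairwise (· ≠ ·))
    (hd₂ : [z₀, z₂, w₂, z₃].Pairwise (· ≠ ·))
    (hd₃ : [z₀, z₃, w₃, z₄].Pairwise (· ≠ ·))
    (hd₄ : [z₀, z₄, w₄, z₁].Pairwise (· ≠ ·))
    (hcr₁ : (z₀ - z₁) * (w₁ - z₂) / ((z₁ - w₁) * (z₂ - z₀)) = -1)
    (hcr₂ : (z₀ - z₂) * (w₂ - z₃) / ((z₂ - w₂) * (z₃ - z₀)) = -1)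
    (hcr₃ : (z₀ - z₃) * (w₃ - z₄) / ((z₃ - w₃) * (z₄ - z₀)) = -1)
    (hcr₄ : (z₀ - z₄) * (w₄ - z₁) / ((z₄ - w₄) * (z₁ - z₀)) = -1) :
    1 / (w₁ - z₀) - 1 / (w₂ - z₀) + 1 / (w₃ - z₀) - 1 / (w₄ - z₀) = 0 := by
  simp only [List.pairwise_cons, List.mem_cons, List.mem_singleton, List.not_mem_nil,
    forall_eq_or_imp, forall_eq, ne_eq] at hd₁ hd₂ hd₃ hd₄
  obtain ⟨⟨h01, h0w1, h02, -⟩, ⟨h1w1, h12⟩, hw12, -⟩ := hd₁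
  obtain ⟨⟨h02', h0w2, h03, -⟩, ⟨h2w2, h23⟩, hw23, -⟩ := hd₂
  obtain ⟨⟨h03', h0w3, h04, -⟩, ⟨h3w3, h34⟩, hw34, -⟩ := hd₃
  obtain ⟨⟨h04', h0w4, h01', -⟩, ⟨h4w4, h41⟩, hw41, -⟩ := hd₄
  rw [cr_neg_one_midpoint z₀ z₁ w₁ z₂ (Ne.symm h01) (Ne.symm h02) (Ne.symm h0w1) h1w1 hw12.1 hcr₁,
    cr_neg_one_midpoint z₀ z₂ w₂ z₃ (Ne.symm h02') (Ne.symm h03) (Ne.symm h0w2) h2w2 hw23.1 hcr₂,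
    cr_neg_one_midpoint z₀ z₃ w₃ z₄ (Ne.symm h03') (Ne.symm h04) (Ne.symm h0w3) h3w3 hw34.1 hcr₃,
    cr_neg_one_midpoint z₀ z₄ w₄ z₁ (Ne.symm h04') (Ne.symm h01') (Ne.symm h0w4) h4w4 hw41.1 hcr₄]
  ring
end

section
/- Let n ≥ 3, let N₀, N₁, …, Nₙ ∈ ℝ³ be unit vectors (cyclic indexing, N_{n+1} = N₁), let p₁, …, pₙ ∈ ℝ³ (cyclic, p_{n+1} = p₁) satisfy ⟨p_r, N₀⟩ = 1 for all r and ⟨p_r, N_r⟩ = ⟨p_{r+1}, N_r⟩ = 1 for all r, and let g₁, …, gₙ ∈ ℝ³ (cyclic, g_{n+1} = g₁) satisfy g_{r+1} − g_r = k_r (N₀ × N_r) for real numbers k₁, …, kₙ. Then (1/2) ∑_{r=1}^{n} ⟨g_r × p_{r+1} + p_r × g_{r+1}, N₀⟩ = ∑_{r=1}^{n} k_r (1 − ⟨N₀, N_r⟩). (The mixed area of a conical face with its Gauss-image face equals the scalar mean curvature, so conical minimal surfaces are C-minimal.) -/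
open Matrix

lemma key_step (g₁ g₂ p₁ p₂ N₀ Nr : Fin 3 → ℝ) (k : ℝ)
    (hg : g₂ = g₁ + k • (crossProduct N₀ Nr : Fin 3 → ℝ))
    (h1 : dot3 p₁ N₀ = 1) (h2 : dot3 p₂ N₀ = 1)
    (h3 : dot3 p₁ Nr = 1) (h4 : dot3 p₂ Nr = 1)
    (h0 : dot3 N₀ N₀ = 1) :
    dot3 (crossProduct g₁ p₂ + crossProduct p₁ g₂) N₀
      = dot3 (crossProduct g₂ p₂) N₀ - dot3 (crossProduct g₁ p₁) N₀
        + 2 * (k * (1 - dot3 N₀ Nr)) := by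
  subst hg
  simp only [dot3, dotProduct, cross_apply, Fin.sum_univ_three, Pi.add_apply,
    Pi.smul_apply, smul_eq_mul, Matrix.cons_val_zero, Matrix.cons_val_one,
    Matrix.head_cons, Matrix.cons_val_two, Matrix.tail_cons] at *
  ring_nf
  linear_combination (k * (N₀ 0 * N₀ 0 + N₀ 1 * N₀ 1 + N₀ 2 * N₀ 2)) * h3
    + (k * (N₀ 0 * N₀ 0 + N₀ 1 * N₀ 1 + N₀ 2 * N₀ 2)) * h4
    - (k * (N₀ 0 * Nr 0 + N₀ 1 * Nr 1 + N₀ 2 * Nr 2)) * h1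
    - (k * (N₀ 0 * Nr 0 + N₀ 1 * Nr 1 + N₀ 2 * Nr 2)) * h2
    + (2 * k) * h0

/-- The mixed area of a conical face with its Gauss-image face equals the
scalar mean curvature, so conical minimal surfaces are C-minimal. -/
theorem mixed_area_eq_scalar_mean_curvature
    (n : ℕ) [NeZero n] (hn : 3 ≤ n)
    (N₀ : Fin 3 → ℝ) (N : Fin n → (Fin 3 → ℝ))
    (hN₀ : dot3 N₀ N₀ = 1) (hN : ∀ r, dot3 (N r) (N r) = 1)
    (p : Fin n → (Fin 3 → ℝ))
    (hp₀ : ∀ r, dot3 (p r) N₀ = 1)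
    (hp : ∀ r : Fin n, dot3 (p r) (N r) = 1)
    (hp' : ∀ r : Fin n, dot3 (p (r + 1)) (N r) = 1)
    (g : Fin n → (Fin 3 → ℝ)) (k : Fin n → ℝ)
    (hg : ∀ r : Fin n, g (r + 1) - g r = k r • crossProduct N₀ (N r)) :
    (1 / 2 : ℝ) * ∑ r : Fin n,
        dot3 (crossProduct (g r) (p (r + 1)) + crossProduct (p r) (g (r + 1))) N₀ =
      ∑ r : Fin n, k r * (1 - dot3 N₀ (N r)) := by
  have key : ∀ r : Fin n,
      dot3 (crossProduct (g r) (p (r + 1)) + crossProduct (p r) (g (r + 1))) N₀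
        = dot3 (crossProduct (g (r + 1)) (p (r + 1))) N₀
          - dot3 (crossProduct (g r) (p r)) N₀
          + 2 * (k r * (1 - dot3 N₀ (N r))) := by
    intro r
    refine key_step (g r) (g (r + 1)) (p r) (p (r + 1)) N₀ (N r) (k r) ?_
      (hp₀ r) (hp₀ (r + 1)) (hp r) (hp' r) hN₀
    have := hg r
    linear_combination (norm := abel) this
  rw [Finset.sum_congr rfl (fun r _ => key r)]
  have hshift : ∑ r : Fin n, dot3 (crossProduct (g (r + 1)) (p (r + 1))) N₀
      = ∑ r : Fin n, dot3 (crossProduct (g r) (p r)) N₀ :=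
    Fintype.sum_equiv (Equiv.addRight (1 : Fin n)) _ _ (fun r => rfl)
  simp only [Finset.sum_add_distrib, Finset.sum_sub_distrib, hshift, ← Finset.mul_sum]
  ring
end
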